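/- arXiv:1012.4096 — 2 statements merged into one kernel-verified Lean document; each statement's English description precedes it below -/
import Mathlib

section
/- Let n ≥ 1 and m ≥ 1, let f : ℝⁿ → ℝᵐ be a C^∞ function with f(0) = 0 and Df(0) = 0, and let φ : ℝⁿ → ℝ be a C^∞ compactly supported function. Then for every complex number s with Re s > -n, the function w ↦ (‖w‖² + ‖f(w)‖²)^{s/2} · φ(w) (where the power is the complex power of a nonnegative real base, taken to be 0 at w = 0 when Re s > 0 and defined arbitrarily there otherwise, since {0} has measure zero) is Lebesgue integrable on ℝⁿ, and the function B(s) = ∫_{ℝⁿ} (‖w‖² + ‖f(w)‖²)^{s/2} φ(w) dw is complex differentiable (holomorphic) on the half-plane {s ∈ ℂ : Re s > -n}. -/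
open MeasureTheory Complex

open Metric Set in
set_option maxHeartbeats 1000000 in
private lemma aux_rpow_integrable (n : ℕ) (hn : 1 ≤ n) {a : ℝ} (ha : -(n : ℝ) < a)
    (ha0 : a < 0) (R : ℝ) :
    IntegrableOn (fun x : EuclideanSpace ℝ (Fin n) => ‖x‖ ^ a)
      (Metric.closedBall 0 R) volume := by
  haveI : Nontrivial (EuclideanSpace ℝ (Fin n)) :=
    Module.nontrivial_of_finrank_pos (R := ℝ) (by rw [finrank_euclideanSpace_fin]; omega)
  have hdim : Module.finrank ℝ (EuclideanSpace ℝ (Fin n)) = n := finrank_euclideanSpace_fin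
  set F : ℝ → ℝ := (Ioc (0:ℝ) R).indicator (fun r => r ^ a) with hFdef
  have hFmeas : Measurable F := by
    apply Measurable.indicator ?_ measurableSet_Ioc
    fun_prop
  -- 1D integrability
  have h1 : IntegrableOn (fun r : ℝ => r ^ (a + ((n:ℝ) - 1))) (Ioc 0 R) volume := by
    have h := intervalIntegral.intervalIntegrable_rpow' (a := 0) (b := max R 0)
      (r := a + ((n:ℝ) - 1)) (by push_cast; linarith)
    have h2 := (intervalIntegrable_iff_integrableOn_Ioc_of_le (le_max_right R 0)).1 h
    exact h2.mono_set (Ioc_subset_Ioc_right (le_max_left R 0))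
  set G : ℝ → ℝ := (Ioc (0:ℝ) R).indicator (fun r => r ^ (a + ((n:ℝ) - 1))) with hGdef
  have hG : Integrable G volume :=
    (integrable_indicator_iff measurableSet_Ioc).2 h1
  -- transfer to the subtype `Ioi 0` with the comap measure
  have h2 : Integrable (fun r : Ioi (0:ℝ) => G r)
      (Measure.comap Subtype.val (volume : Measure ℝ)) := by
    have hmap := map_comap_subtype_coe (measurableSet_Ioi (a := (0:ℝ))) (volume : Measure ℝ)
    have hms : Integrable G
        (Measure.map (Subtype.val : Ioi (0:ℝ) → ℝ)
          (Measure.comap (Subtype.val : Ioi (0:ℝ) → ℝ) (volume : Measure ℝ))) := by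
      rw [hmap]; exact hG.integrableOn
    exact ((MeasurableEmbedding.subtype_coe measurableSet_Ioi).integrable_map_iff).1 hms
  -- with density r ^ (n-1)
  have h3 : Integrable (fun r : Ioi (0:ℝ) => F r) (Measure.volumeIoiPow (n - 1)) := by
    rw [Measure.volumeIoiPow]
    rw [integrable_withDensity_iff (by fun_prop)
      (Filter.Eventually.of_forall fun r => ENNReal.ofReal_lt_top)]
    apply h2.congr
    apply Filter.Eventually.of_forall
    intro r
    have hr : (0:ℝ) < r := r.2
    show G ↑r = F ↑r * (ENNReal.ofReal ((r:ℝ) ^ (n - 1))).toReal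
    rw [ENNReal.toReal_ofReal (by positivity : (0:ℝ) ≤ (r:ℝ) ^ (n - 1))]
    by_cases hrR : (r:ℝ) ∈ Ioc (0:ℝ) R
    · simp only [hGdef, hFdef, indicator_of_mem hrR]
      rw [Real.rpow_add hr, ← Real.rpow_natCast (r:ℝ) (n-1), Nat.cast_sub hn]
      norm_num
    · simp only [hGdef, hFdef, indicator_of_notMem hrR, zero_mul]
  -- transfer to the product measure
  have h4 : Integrable
      (fun p : sphere (0:EuclideanSpace ℝ (Fin n)) 1 × Ioi (0:ℝ) => F p.2)
      ((volume : Measure (EuclideanSpace ℝ (Fin n))).toSphere.prod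
        (Measure.volumeIoiPow (n - 1))) := by
    have hc : (volume : Measure (EuclideanSpace ℝ (Fin n))).toSphere univ ≠ ⊤ :=
      measure_ne_top _ _
    have hsmul : Integrable (fun r : Ioi (0:ℝ) => F r)
        (((volume : Measure (EuclideanSpace ℝ (Fin n))).toSphere univ) •
          Measure.volumeIoiPow (n - 1)) := h3.smul_measure hc
    have hmapeq : Measure.map Prod.snd
        ((volume : Measure (EuclideanSpace ℝ (Fin n))).toSphere.prod
          (Measure.volumeIoiPow (n - 1)))
        = ((volume : Measure (EuclideanSpace ℝ (Fin n))).toSphere univ) •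
          Measure.volumeIoiPow (n - 1) := Measure.map_snd_prod
    have hsm : AEStronglyMeasurable (fun r : Ioi (0:ℝ) => F r)
        (Measure.map Prod.snd
          ((volume : Measure (EuclideanSpace ℝ (Fin n))).toSphere.prod
            (Measure.volumeIoiPow (n - 1)))) :=
      (hFmeas.comp measurable_subtype_coe).aestronglyMeasurable
    have := (integrable_map_measure hsm measurable_snd.aemeasurable).1
      (by rw [hmapeq]; exact hsmul)
    exact this
  -- transfer through the polar-coordinates homeomorphism
  have h5 : Integrable
      (fun x : ({0}ᶜ : Set (EuclideanSpace ℝ (Fin n))) => F ‖(x : EuclideanSpace ℝ (Fin n))‖)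
      (Measure.comap Subtype.val (volume : Measure (EuclideanSpace ℝ (Fin n)))) := by
    have h4' : Integrable
        (fun p : sphere (0:EuclideanSpace ℝ (Fin n)) 1 × Ioi (0:ℝ) => F p.2)
        ((volume : Measure (EuclideanSpace ℝ (Fin n))).toSphere.prod
          (Measure.volumeIoiPow
            (Module.finrank ℝ (EuclideanSpace ℝ (Fin n)) - 1))) := by
      rw [hdim]; exact h4
    have := ((volume : Measure
        (EuclideanSpace ℝ (Fin n))).measurePreserving_homeomorphUnitSphereProd.integrable_comp_emb
      (Homeomorph.measurableEmbedding _)).2 h4'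
    simpa [Function.comp_def] using this
  -- back to the whole space
  have h6 : Integrable (fun x : EuclideanSpace ℝ (Fin n) => F ‖x‖) volume := by
    have hmeas0 : MeasurableSet ({0}ᶜ : Set (EuclideanSpace ℝ (Fin n))) :=
      (measurableSet_singleton 0).compl
    have hmap := map_comap_subtype_coe hmeas0 (volume : Measure (EuclideanSpace ℝ (Fin n)))
    have := ((MeasurableEmbedding.subtype_coe hmeas0).integrable_map_iff
      (g := fun x : EuclideanSpace ℝ (Fin n) => F ‖x‖)).2 h5
    rw [hmap, MeasureTheory.restrict_compl_singleton] at this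
    exact this
  have h7 : (closedBall (0:EuclideanSpace ℝ (Fin n)) R).indicator
      (fun x : EuclideanSpace ℝ (Fin n) => ‖x‖ ^ a)
      = fun x : EuclideanSpace ℝ (Fin n) => F ‖x‖ := by
    funext x
    by_cases hx : x ∈ closedBall (0:EuclideanSpace ℝ (Fin n)) R
    · rw [indicator_of_mem hx]
      by_cases hx0 : x = 0
      · subst hx0
        have h0 : ‖(0:EuclideanSpace ℝ (Fin n))‖ = 0 := norm_zero
        rw [h0]
        have : (0:ℝ) ∉ Ioc (0:ℝ) R := by simp
        rw [hFdef, indicator_of_notMem this, Real.zero_rpow (ne_of_lt ha0)]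
      · have hmem : ‖x‖ ∈ Ioc (0:ℝ) R :=
          ⟨norm_pos_iff.2 hx0, mem_closedBall_zero_iff.1 hx⟩
        rw [hFdef, indicator_of_mem hmem]
    · rw [indicator_of_notMem hx]
      have hmem : ‖x‖ ∉ Ioc (0:ℝ) R := fun h => hx (mem_closedBall_zero_iff.2 h.2)
      rw [hFdef, indicator_of_notMem hmem]
  have h8 : Integrable ((closedBall (0:EuclideanSpace ℝ (Fin n)) R).indicator
      (fun x : EuclideanSpace ℝ (Fin n) => ‖x‖ ^ a)) volume := by
    rw [h7]; exact h6
  exact (integrable_indicator_iff measurableSet_closedBall).1 h8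

open Metric Set in
set_option maxHeartbeats 1000000 in
private lemma aux_main (n : ℕ) (hn : 1 ≤ n)
    (g : EuclideanSpace ℝ (Fin n) → ℝ) (hgc : Continuous g)
    (hlb : ∀ w, ‖w‖ ^ 2 ≤ g w)
    (φ : EuclideanSpace ℝ (Fin n) → ℝ) (hφ : Continuous φ) (hφc : HasCompactSupport φ) :
    (∀ s : ℂ, -(n : ℝ) < s.re →
      Integrable (fun w : EuclideanSpace ℝ (Fin n) =>
        (((g w : ℝ) : ℂ) ^ (s / 2)) * (φ w : ℂ))) ∧
    DifferentiableOn ℂ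
      (fun s : ℂ => ∫ w : EuclideanSpace ℝ (Fin n),
        (((g w : ℝ) : ℂ) ^ (s / 2)) * (φ w : ℂ))
      {s : ℂ | -(n : ℝ) < s.re} := by
  haveI : Nontrivial (EuclideanSpace ℝ (Fin n)) :=
    Module.nontrivial_of_finrank_pos (R := ℝ) (by rw [finrank_euclideanSpace_fin]; omega)
  have hn0 : (0:ℝ) < n := by exact_mod_cast hn
  have hg0 : ∀ w, 0 ≤ g w := fun w => le_trans (by positivity) (hlb w)
  have hgpos : ∀ w : EuclideanSpace ℝ (Fin n), w ≠ 0 → 0 < g w := fun w hw =>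
    lt_of_lt_of_le (pow_pos (norm_pos_iff.2 hw) 2) (hlb w)
  obtain ⟨R, hRpos, hR⟩ := hφc.isBounded.subset_closedBall_lt 0 0
  obtain ⟨T0, hT0⟩ := (isCompact_closedBall (0:EuclideanSpace ℝ (Fin n)) R).exists_bound_of_continuousOn
    hgc.continuousOn
  set T : ℝ := max T0 1 with hTdef
  have hT1 : (1:ℝ) ≤ T := le_max_right _ _
  have hT : ∀ w ∈ closedBall (0:EuclideanSpace ℝ (Fin n)) R, g w ≤ T := fun w hw =>
    le_trans (le_trans (le_abs_self _) (by rw [← Real.norm_eq_abs]; exact hT0 w hw))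
      (le_max_left _ _)
  have hTpos : (0:ℝ) < T := lt_of_lt_of_le one_pos hT1
  obtain ⟨C0, hC0⟩ := IsCompact.exists_bound_of_continuousOn hφc hφ.continuousOn
  set C : ℝ := max C0 0 with hCdef
  have hCnn : (0:ℝ) ≤ C := le_max_right _ _
  have hC : ∀ w, |φ w| ≤ C := by
    intro w
    by_cases hw : w ∈ tsupport φ
    · exact le_trans (by rw [← Real.norm_eq_abs]; exact hC0 w hw) (le_max_left _ _)
    · rw [image_eq_zero_of_notMem_tsupport hw]; simpa using hCnn
  have mφ : Measurable φ := hφ.measurable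
  -- a.e. points are nonzero
  have hae0 : ∀ᵐ w : EuclideanSpace ℝ (Fin n) ∂volume, w ≠ 0 := by
    have h0 : volume ({0} : Set (EuclideanSpace ℝ (Fin n))) = 0 := measure_singleton 0
    rw [ae_iff]
    convert h0 using 2
    ext w; simp
  -- real part of s/2
  have hre : ∀ s : ℂ, (s/2).re = s.re / 2 := fun s => by
    have h2 : ((2:ℝ):ℂ) = (2:ℂ) := by norm_num
    rw [← h2, Complex.div_ofReal_re]
  -- norm of the integrand
  have hnorm : ∀ (s : ℂ) (w : EuclideanSpace ℝ (Fin n)), w ≠ 0 →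
      ‖((g w : ℝ):ℂ) ^ (s/2) * ((φ w : ℝ):ℂ)‖ = g w ^ (s.re/2) * |φ w| := by
    intro s w hw
    rw [norm_mul,
      Complex.norm_cpow_eq_rpow_re_of_pos (hgpos w hw), hre s, Complex.norm_real,
      Real.norm_eq_abs]
  -- measurability of the integrand
  have hmeasH : ∀ s : ℂ, AEStronglyMeasurable
      (fun w : EuclideanSpace ℝ (Fin n) => ((g w : ℝ):ℂ) ^ (s/2) * ((φ w : ℝ):ℂ)) volume := by
    intro s
    have hH : Measurable fun w : EuclideanSpace ℝ (Fin n) =>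
        Complex.exp ((s/2) * ((Real.log (g w) : ℝ) : ℂ)) * ((φ w : ℝ) : ℂ) := by
      apply Measurable.mul
      · exact (Measurable.const_mul (Complex.measurable_ofReal.comp
          (Real.measurable_log.comp hgc.measurable)) _).cexp
      · exact Complex.measurable_ofReal.comp mφ
    refine hH.aestronglyMeasurable.congr ?_
    filter_upwards [hae0] with w hw
    have hc0 : ((g w : ℝ) : ℂ) ≠ 0 := by
      exact_mod_cast (hgpos w hw).ne'
    rw [Complex.cpow_def_of_ne_zero hc0, ← Complex.ofReal_log (hg0 w),
      mul_comm ((Real.log (g w) : ℝ) : ℂ) (s/2)]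
  -- the dominating functions are integrable
  have domin : ∀ aa bb : ℝ, -(n:ℝ) < aa → aa < 0 →
      Integrable (fun w : EuclideanSpace ℝ (Fin n) =>
        (‖w‖ ^ aa + T ^ (bb/2)) * |φ w|) volume := by
    intro aa bb haa1 haa0
    have h1 : Integrable (fun w : EuclideanSpace ℝ (Fin n) =>
        ((closedBall (0:EuclideanSpace ℝ (Fin n)) R).indicator
          (fun w => ‖w‖ ^ aa) w) * C) volume :=
      ((integrable_indicator_iff measurableSet_closedBall).2
        (aux_rpow_integrable n hn haa1 haa0 R)).mul_const C
    have h2 : Integrable (fun w : EuclideanSpace ℝ (Fin n) => ‖w‖ ^ aa * |φ w|) volume := by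
      apply h1.mono'
      · exact ((by fun_prop : Measurable fun w : EuclideanSpace ℝ (Fin n) => ‖w‖ ^ aa).mul
          mφ.abs).aestronglyMeasurable
      · refine Filter.Eventually.of_forall fun w => ?_
        rw [Real.norm_eq_abs, _root_.abs_mul, _root_.abs_of_nonneg (Real.rpow_nonneg (norm_nonneg w) aa),
          _root_.abs_abs]
        by_cases hw : w ∈ tsupport φ
        · rw [indicator_of_mem (hR hw)]
          exact mul_le_mul_of_nonneg_left (hC w) (Real.rpow_nonneg (norm_nonneg w) aa)
        · rw [image_eq_zero_of_notMem_tsupport hw]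
          simp only [abs_zero, mul_zero]
          apply mul_nonneg _ hCnn
          exact indicator_nonneg (fun x _ => Real.rpow_nonneg (norm_nonneg x) aa) w
    have h3 : Integrable (fun w : EuclideanSpace ℝ (Fin n) => T ^ (bb/2) * |φ w|) volume := by
      apply Continuous.integrable_of_hasCompactSupport
      · exact continuous_const.mul (continuous_abs.comp hφ)
      · exact hφc.comp_left (g := fun x : ℝ => T ^ (bb/2) * |x|) (by simp)
    have heq : (fun w : EuclideanSpace ℝ (Fin n) => (‖w‖ ^ aa + T ^ (bb/2)) * |φ w|)
        = fun w => ‖w‖ ^ aa * |φ w| + T ^ (bb/2) * |φ w| := by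
      funext w; ring
    rw [heq]
    exact h2.add h3
  -- the key pointwise bound
  have key : ∀ aa bb : ℝ, aa ≤ 0 → 0 ≤ bb → ∀ c : ℝ, aa ≤ 2*c → 2*c ≤ bb →
      ∀ w : EuclideanSpace ℝ (Fin n), w ≠ 0 →
        w ∈ closedBall (0:EuclideanSpace ℝ (Fin n)) R →
      g w ^ c ≤ ‖w‖ ^ aa + T ^ (bb/2) := by
    intro aa bb haa hbb c hc1 hc2 w hw0 hwR
    have hgw := hgpos w hw0
    have hTb : 0 ≤ T ^ (bb/2) := Real.rpow_nonneg hTpos.le _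
    have hna : 0 ≤ ‖w‖ ^ aa := Real.rpow_nonneg (norm_nonneg w) _
    rcases le_total (g w) 1 with h1 | h1
    · have e1 : g w ^ c ≤ g w ^ (aa/2) :=
        Real.rpow_le_rpow_of_exponent_ge hgw h1 (by linarith)
      have hw2 : 0 < ‖w‖^2 := pow_pos (norm_pos_iff.2 hw0) 2
      have e2 : g w ^ (aa/2) ≤ (‖w‖^2 : ℝ) ^ (aa/2) :=
        Real.rpow_le_rpow_of_nonpos hw2 (hlb w) (by linarith)
      have e3 : ((‖w‖^2 : ℝ)) ^ (aa/2) = ‖w‖ ^ aa := by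
        rw [← Real.rpow_natCast ‖w‖ 2, ← Real.rpow_mul (norm_nonneg w)]
        congr 1
        push_cast
        ring
      rw [e3] at e2
      linarith
    · have e1 : g w ^ c ≤ g w ^ (bb/2) :=
        Real.rpow_le_rpow_of_exponent_le h1 (by linarith)
      have e2 : g w ^ (bb/2) ≤ T ^ (bb/2) :=
        Real.rpow_le_rpow (hg0 w) (hT w hwR) (by linarith)
      linarith
  -- PART 1 : integrability
  have intpart : ∀ s : ℂ, -(n:ℝ) < s.re → Integrable
      (fun w : EuclideanSpace ℝ (Fin n) => ((g w : ℝ):ℂ) ^ (s/2) * ((φ w : ℝ):ℂ)) volume := by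
    intro s hs
    have htmin : -(n:ℝ) < min s.re 0 := lt_min hs (neg_lt_zero.2 hn0)
    have htle : min s.re 0 ≤ s.re := min_le_left _ _
    have htle0 : min s.re 0 ≤ 0 := min_le_right _ _
    set aa : ℝ := (min s.re 0 - n)/2 with haadef
    have haa1 : -(n:ℝ) < aa := by rw [haadef]; linarith
    have haa0 : aa < 0 := by rw [haadef]; linarith
    have haas : aa ≤ s.re := by rw [haadef]; linarith
    set bb : ℝ := max s.re 0 with hbbdef
    apply (domin aa bb haa1 haa0).mono' (hmeasH s)
    filter_upwards [hae0] with w hw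
    rw [hnorm s w hw]
    by_cases hφw : φ w = 0
    · simp [hφw]
    · have hwK : w ∈ closedBall (0:EuclideanSpace ℝ (Fin n)) R :=
        hR (subset_tsupport φ hφw)
      refine mul_le_mul_of_nonneg_right ?_ (abs_nonneg _)
      exact key aa bb haa0.le (le_max_right _ _) (s.re/2) (by linarith)
        (by rw [hbbdef]; have := le_max_left s.re 0; linarith) w hw hwK
  refine ⟨intpart, ?_⟩
  -- PART 2 : holomorphy
  intro s₀ hs₀
  simp only [mem_setOf_eq] at hs₀
  set ε : ℝ := (s₀.re + n)/4 with hεdef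
  have hεpos : 0 < ε := by rw [hεdef]; linarith
  set t : ℝ := min (s₀.re - 3*ε) 0 with htdef
  have ht1 : -(n:ℝ) < t := by
    apply lt_min _ (neg_lt_zero.2 hn0)
    rw [hεdef]; linarith
  have ht2 : t ≤ 0 := min_le_right _ _
  have ht3 : t ≤ s₀.re - 3*ε := min_le_left _ _
  set aa : ℝ := (t - n)/2 with haadef
  have haa1 : -(n:ℝ) < aa := by rw [haadef]; linarith
  have haa0 : aa < 0 := by rw [haadef]; linarith
  have haat : aa ≤ t := by rw [haadef]; linarith
  set bb : ℝ := max (s₀.re + 3*ε) 0 with hbbdef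
  have hbb0 : (0:ℝ) ≤ bb := le_max_right _ _
  have hbb1 : s₀.re + 3*ε ≤ bb := le_max_left _ _
  -- the derivative in `s`
  set F' : ℂ → EuclideanSpace ℝ (Fin n) → ℂ := fun s w =>
    ((g w : ℝ):ℂ) ^ (s/2) * ((Real.log (g w) / 2 : ℝ) : ℂ) * ((φ w : ℝ):ℂ) with hF'def
  -- measurability of the derivative
  have hmeasF' : AEStronglyMeasurable (F' s₀) volume := by
    have hH : Measurable fun w : EuclideanSpace ℝ (Fin n) =>
        Complex.exp ((s₀/2) * ((Real.log (g w) : ℝ) : ℂ)) *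
          ((Real.log (g w) / 2 : ℝ) : ℂ) * ((φ w : ℝ) : ℂ) := by
      have hlog : Measurable fun w : EuclideanSpace ℝ (Fin n) => Real.log (g w) :=
        Real.measurable_log.comp hgc.measurable
      exact ((((Complex.measurable_ofReal.comp hlog).const_mul (s₀/2)).cexp).mul
        (Complex.measurable_ofReal.comp (hlog.div_const 2))).mul
        (Complex.measurable_ofReal.comp mφ)
    refine hH.aestronglyMeasurable.congr ?_
    filter_upwards [hae0] with w hw
    have hc0 : ((g w : ℝ) : ℂ) ≠ 0 := by exact_mod_cast (hgpos w hw).ne'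
    simp only [hF'def]
    rw [Complex.cpow_def_of_ne_zero hc0, ← Complex.ofReal_log (hg0 w),
      mul_comm ((Real.log (g w) : ℝ) : ℂ) (s₀/2)]
  -- the uniform bound on the derivative
  have h_bound : ∀ᵐ w : EuclideanSpace ℝ (Fin n) ∂volume, ∀ s ∈ ball s₀ ε,
      ‖F' s w‖ ≤ ε⁻¹ * ((‖w‖ ^ aa + T ^ (bb/2)) * |φ w|) := by
    filter_upwards [hae0] with w hw
    intro s hs
    have hgw := hgpos w hw
    have hsre : |s.re - s₀.re| < ε := by
      have h1 : dist s s₀ < ε := mem_ball.1 hs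
      rw [Complex.dist_eq] at h1
      calc |s.re - s₀.re| = |(s - s₀).re| := by rw [Complex.sub_re]
        _ ≤ ‖s - s₀‖ := Complex.abs_re_le_norm _
        _ < ε := h1
    have habs : |s.re - s₀.re| < ε := hsre
    have hre1 : s₀.re - ε < s.re := by
      have := _root_.abs_lt.1 habs; linarith [this.1]
    have hre2 : s.re < s₀.re + ε := by
      have := _root_.abs_lt.1 habs; linarith [this.2]
    have hFnorm : ‖F' s w‖ = g w ^ (s.re/2) * (|Real.log (g w)| / 2) * |φ w| := by
      simp only [hF'def]
      rw [norm_mul, norm_mul,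
        Complex.norm_cpow_eq_rpow_re_of_pos hgw, hre s, Complex.norm_real,
        Complex.norm_real, Real.norm_eq_abs, Real.norm_eq_abs, _root_.abs_div]
      norm_num
    rw [hFnorm]
    by_cases hφw : φ w = 0
    · simp [hφw]
    · have hwK : w ∈ closedBall (0:EuclideanSpace ℝ (Fin n)) R :=
        hR (subset_tsupport φ hφw)
      -- bound |log (g w)|
      have hlog1 : Real.log (g w) ≤ g w ^ ε / ε := Real.log_le_rpow_div (hg0 w) hεpos
      have hlog2 : -Real.log (g w) ≤ g w ^ (-ε) / ε := by
        have h1 : Real.log (g w)⁻¹ ≤ ((g w)⁻¹) ^ ε / ε :=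
          Real.log_le_rpow_div (inv_nonneg.2 (hg0 w)) hεpos
        rw [Real.log_inv, Real.inv_rpow (hg0 w)] at h1
        rw [Real.rpow_neg (hg0 w)]
        exact h1
      have hlog : |Real.log (g w)| ≤ g w ^ ε / ε + g w ^ (-ε) / ε := by
        have hnn1 : 0 ≤ g w ^ ε / ε := by positivity
        have hnn2 : 0 ≤ g w ^ (-ε) / ε := by positivity
        rw [_root_.abs_le]
        constructor <;> linarith
      -- key bound at the shifted exponents
      have hkey1 : g w ^ (s.re/2 + ε) ≤ ‖w‖ ^ aa + T ^ (bb/2) := by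
        apply key aa bb haa0.le hbb0 (s.re/2 + ε) _ _ w hw hwK
        · linarith
        · linarith
      have hkey2 : g w ^ (s.re/2 - ε) ≤ ‖w‖ ^ aa + T ^ (bb/2) := by
        apply key aa bb haa0.le hbb0 (s.re/2 - ε) _ _ w hw hwK
        · linarith
        · linarith
      have hmul : g w ^ (s.re/2) * |Real.log (g w)| ≤
          ε⁻¹ * (g w ^ (s.re/2 + ε) + g w ^ (s.re/2 - ε)) := by
        have h1 := mul_le_mul_of_nonneg_left hlog (Real.rpow_nonneg (hg0 w) (s.re/2))
        calc g w ^ (s.re/2) * |Real.log (g w)|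
            ≤ g w ^ (s.re/2) * (g w ^ ε / ε + g w ^ (-ε) / ε) := h1
          _ = ε⁻¹ * (g w ^ (s.re/2 + ε) + g w ^ (s.re/2 - ε)) := by
              rw [Real.rpow_add hgw, Real.rpow_sub hgw, Real.rpow_neg (hg0 w)]
              field_simp
      have h3 : ε⁻¹ * (g w ^ (s.re/2 + ε) + g w ^ (s.re/2 - ε)) ≤
          ε⁻¹ * ((‖w‖ ^ aa + T ^ (bb/2)) + (‖w‖ ^ aa + T ^ (bb/2))) := by
        apply mul_le_mul_of_nonneg_left _ (by positivity)
        exact add_le_add hkey1 hkey2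
      have hmain : g w ^ (s.re/2) * (|Real.log (g w)| / 2) ≤
          ε⁻¹ * (‖w‖ ^ aa + T ^ (bb/2)) := by
        have := le_trans hmul h3
        nlinarith [this]
      calc g w ^ (s.re/2) * (|Real.log (g w)| / 2) * |φ w|
          ≤ (ε⁻¹ * (‖w‖ ^ aa + T ^ (bb/2))) * |φ w| :=
            mul_le_mul_of_nonneg_right hmain (abs_nonneg _)
        _ = ε⁻¹ * ((‖w‖ ^ aa + T ^ (bb/2)) * |φ w|) := by ring
  -- integrability of the bound
  have bound_int : Integrable (fun w : EuclideanSpace ℝ (Fin n) =>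
      ε⁻¹ * ((‖w‖ ^ aa + T ^ (bb/2)) * |φ w|)) volume :=
    (domin aa bb haa1 haa0).const_mul ε⁻¹
  -- the pointwise derivative
  have h_diff : ∀ᵐ w : EuclideanSpace ℝ (Fin n) ∂volume, ∀ s ∈ ball s₀ ε,
      HasDerivAt (fun s : ℂ => ((g w : ℝ):ℂ) ^ (s/2) * ((φ w : ℝ):ℂ)) (F' s w) s := by
    filter_upwards [hae0] with w hw
    intro s _
    have hc0 : ((g w : ℝ) : ℂ) ≠ 0 := by exact_mod_cast (hgpos w hw).ne'
    have h1 : HasDerivAt (fun y : ℂ => ((g w : ℝ):ℂ) ^ y)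
        (((g w : ℝ):ℂ) ^ (s/2) * Complex.log ((g w : ℝ):ℂ)) (s/2) :=
      (hasStrictDerivAt_const_cpow (Or.inl hc0)).hasDerivAt
    have h2 : HasDerivAt (fun s : ℂ => s / 2) ((1:ℂ)/2) s := by
      simpa using (hasDerivAt_id s).div_const 2
    have h3 : HasDerivAt (fun s : ℂ => ((g w : ℝ):ℂ) ^ (s/2) * ((φ w : ℝ):ℂ))
        ((((g w : ℝ):ℂ) ^ (s/2) * Complex.log ((g w : ℝ):ℂ)) * ((1:ℂ)/2) * ((φ w : ℝ):ℂ)) s :=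
      (h1.comp s h2).mul_const _
    convert h3 using 1
    simp only [hF'def]
    rw [← Complex.ofReal_log (hg0 w)]
    push_cast
    ring
  -- apply the dominated-derivative theorem
  have H := hasDerivAt_integral_of_dominated_loc_of_deriv_le
    (F := fun (s : ℂ) (w : EuclideanSpace ℝ (Fin n)) => ((g w : ℝ):ℂ) ^ (s/2) * ((φ w : ℝ):ℂ))
    (F' := F')
    (bound := fun w : EuclideanSpace ℝ (Fin n) =>
      ε⁻¹ * ((‖w‖ ^ aa + T ^ (bb/2)) * |φ w|))
    (ball_mem_nhds s₀ hεpos) (Filter.Eventually.of_forall fun s => hmeasH s) (intpart s₀ hs₀)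
    hmeasF' h_bound bound_int h_diff
  exact H.2.differentiableAt.differentiableWithinAt

/-- For smooth `f : ℝⁿ → ℝᵐ` vanishing to second order at `0` and smooth
compactly supported `φ : ℝⁿ → ℝ`, the integrand `w ↦ (‖w‖² + ‖f w‖²)^(s/2) · φ w`
is integrable for `Re s > -n`, and the resulting localized Brylinski beta function
is holomorphic on the half-plane `{s : Re s > -n}`. -/
theorem brylinski_beta_local_integrable_and_holomorphic
    (n m : ℕ) (hn : 1 ≤ n) (hm : 1 ≤ m)
    (f : EuclideanSpace ℝ (Fin n) → EuclideanSpace ℝ (Fin m))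
    (hf : ContDiff ℝ (⊤ : ℕ∞) f) (hf0 : f 0 = 0) (hdf0 : fderiv ℝ f 0 = 0)
    (φ : EuclideanSpace ℝ (Fin n) → ℝ)
    (hφ : ContDiff ℝ (⊤ : ℕ∞) φ) (hφc : HasCompactSupport φ) :
    (∀ s : ℂ, -(n : ℝ) < s.re →
      Integrable (fun w : EuclideanSpace ℝ (Fin n) =>
        (((‖w‖ ^ 2 + ‖f w‖ ^ 2 : ℝ) : ℂ) ^ (s / 2)) * (φ w : ℂ))) ∧
    DifferentiableOn ℂ
      (fun s : ℂ => ∫ w : EuclideanSpace ℝ (Fin n),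
        (((‖w‖ ^ 2 + ‖f w‖ ^ 2 : ℝ) : ℂ) ^ (s / 2)) * (φ w : ℂ))
      {s : ℂ | -(n : ℝ) < s.re} := by
  have hgc : Continuous fun w : EuclideanSpace ℝ (Fin n) => ‖w‖ ^ 2 + ‖f w‖ ^ 2 := by
    have := hf.continuous
    fun_prop
  have hlb : ∀ w : EuclideanSpace ℝ (Fin n), ‖w‖ ^ 2 ≤ ‖w‖ ^ 2 + ‖f w‖ ^ 2 := fun w =>
    le_add_of_nonneg_right (by positivity)
  exact aux_main n hn (fun w => ‖w‖ ^ 2 + ‖f w‖ ^ 2) hgc hlb φ hφ.continuous hφc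
end

section
/- Let n ≥ 1 and k ≥ 1 be integers, and let S : ℝ × ℂ → ℂ be a function that is jointly continuous, infinitely differentiable in the first variable r with each partial derivative ∂ʲS/∂rʲ jointly continuous on ℝ × ℂ, and entire in the second variable s for each fixed r. Then the function h(s) = ∫₀¹ r^{s+n−1} · ( S(r, s) − Σ_{j=0}^{k−1} (rʲ/j!) · ∂ʲS/∂rʲ(0, s) ) dr is well defined (the integrand is integrable on (0,1)) and complex differentiable (holomorphic) on the half-plane {s ∈ ℂ : Re s > −n − k}. -/
open MeasureTheory Complex

/-- The iterated partial derivative in the first (real) variable of a function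
`S : ℝ × ℂ → ℂ`: `partialDerivFst S j (r, s) = ∂ʲS/∂rʲ (r, s)`. -/
noncomputable def partialDerivFst (S : ℝ × ℂ → ℂ) : ℕ → ℝ × ℂ → ℂ
  | 0 => S
  | j + 1 => fun p => deriv (fun r : ℝ => partialDerivFst S j (r, p.2)) p.1


open Set Metric Filter
open scoped Topology

section Aux

open scoped ContDiff

lemma partialDerivFst_eq_iteratedDeriv (S : ℝ × ℂ → ℂ) (j : ℕ) (s : ℂ) (r : ℝ) :
    partialDerivFst S j (r, s) = iteratedDeriv j (fun r : ℝ => S (r, s)) r := by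
  induction j generalizing r with
  | zero => rfl
  | succ j ih =>
    show deriv (fun r : ℝ => partialDerivFst S j (r, s)) r = _
    rw [iteratedDeriv_succ]
    congr 1
    funext u
    exact ih u

lemma contDiff_partialDerivFst (S : ℝ × ℂ → ℂ) (hSr : ∀ s : ℂ, ContDiff ℝ (⊤ : ℕ∞) fun r : ℝ => S (r, s))
    (j : ℕ) (s : ℂ) : ContDiff ℝ ∞ fun r : ℝ => partialDerivFst S j (r, s) := by
  have h : ContDiff ℝ ∞ fun r : ℝ => S (r, s) := (hSr s).of_le (by simp)
  simp only [partialDerivFst_eq_iteratedDeriv, iteratedDeriv_eq_iterate]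
  exact h.iterate_deriv j

lemma hasDerivAt_partialDerivFst (S : ℝ × ℂ → ℂ)
    (hSr : ∀ s : ℂ, ContDiff ℝ (⊤ : ℕ∞) fun r : ℝ => S (r, s)) (j : ℕ) (s : ℂ) (r : ℝ) :
    HasDerivAt (fun r : ℝ => partialDerivFst S j (r, s)) (partialDerivFst S (j + 1) (r, s)) r :=
  (((contDiff_partialDerivFst S hSr j s).differentiable
    (by simp)) r).hasDerivAt

lemma differentiable_partialDerivFst (S : ℝ × ℂ → ℂ)
    (hSr : ∀ s : ℂ, ContDiff ℝ (⊤ : ℕ∞) fun r : ℝ => S (r, s))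
    (hSj : ∀ j : ℕ, Continuous (partialDerivFst S j))
    (hSs : ∀ r : ℝ, Differentiable ℂ fun s : ℂ => S (r, s)) (j : ℕ) (r : ℝ) :
    Differentiable ℂ fun s : ℂ => partialDerivFst S j (r, s) := by
  induction j generalizing r with
  | zero => exact hSs r
  | succ j ih =>
    rw [← differentiableOn_univ]
    refine TendstoLocallyUniformlyOn.differentiableOn
      (F := fun h : ℝ => fun s : ℂ =>
        (partialDerivFst S j (r + h, s) - partialDerivFst S j (r, s)) / (h : ℂ))
      (φ := 𝓝[≠] (0 : ℝ)) ?_ ?_ isOpen_univ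
    · rw [tendstoLocallyUniformlyOn_univ, tendstoLocallyUniformly_iff_forall_isCompact]
      intro K hK
      rw [Metric.tendstoUniformlyOn_iff]
      intro ε hε
      have hQ : IsCompact (Icc (r - 1) (r + 1) ×ˢ K) := isCompact_Icc.prod hK
      have hUC := hQ.uniformContinuousOn_of_continuous (hSj (j + 1)).continuousOn
      rw [Metric.uniformContinuousOn_iff] at hUC
      obtain ⟨δ, hδ, hδ'⟩ := hUC (ε / 2) (half_pos hε)
      have hev : ∀ᶠ h : ℝ in 𝓝[≠] (0 : ℝ), h ≠ 0 ∧ (|h| < δ ∧ |h| < 1) := by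
        filter_upwards [self_mem_nhdsWithin,
          eventually_nhdsWithin_of_eventually_nhds
            (Metric.eventually_nhds_iff.2 ⟨min δ 1, lt_min hδ one_pos,
              fun {h} hh => by
                rw [Real.dist_eq, sub_zero] at hh
                exact lt_min_iff.1 hh⟩)] with h h0 h1
        exact ⟨h0, h1⟩
      filter_upwards [hev] with h hh s hs
      obtain ⟨h0, habs⟩ := hh
      set f : ℝ → ℂ := fun u => partialDerivFst S j (u, s) with hf
      set g : ℝ → ℂ := fun u => partialDerivFst S (j + 1) (u, s) with hg
      have hder : ∀ u : ℝ, HasDerivAt f (g u) u := fun u =>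
        hasDerivAt_partialDerivFst S hSr j s u
      have hgc : Continuous g :=
        (hSj (j + 1)).comp (continuous_id.prodMk continuous_const)
      have key : (∫ u in r..(r + h), g u) = f (r + h) - f r :=
        intervalIntegral.integral_eq_sub_of_hasDerivAt (fun u _ => hder u)
          (hgc.intervalIntegrable _ _)
      have hsplit : (f (r + h) - f r) / (h : ℂ) - g r
          = (∫ u in r..(r + h), (g u - g r)) / (h : ℂ) := by
        rw [intervalIntegral.integral_sub (hgc.intervalIntegrable _ _)
          (intervalIntegrable_const), key, intervalIntegral.integral_const]
        have : ((r + h) - r : ℝ) = h := by ring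
        rw [this]
        have hhc : (h : ℂ) ≠ 0 := by exact_mod_cast h0
        rw [Complex.real_smul]
        field_simp
      have hbound : ∀ u ∈ Set.uIoc r (r + h), ‖g u - g r‖ ≤ ε / 2 := by
        intro u hu
        have hur : |u - r| ≤ |h| := by
          rcases Set.mem_uIoc.1 hu with ⟨h1, h2⟩ | ⟨h1, h2⟩ <;>
          · rw [abs_le]
            constructor <;> nlinarith [le_abs_self h, neg_abs_le h]
        have h1 : ((u, s) : ℝ × ℂ) ∈ Icc (r - 1) (r + 1) ×ˢ K := by
          constructor
          · have : |u - r| ≤ 1 := hur.trans habs.2.le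
            rw [abs_le] at this
            constructor <;> simp <;> linarith [this.1, this.2]
          · exact hs
        have h2 : ((r, s) : ℝ × ℂ) ∈ Icc (r - 1) (r + 1) ×ˢ K := by
          constructor
          · constructor <;> simp <;> linarith
          · exact hs
        have hdist : dist ((u, s) : ℝ × ℂ) ((r, s) : ℝ × ℂ) < δ := by
          rw [Prod.dist_eq]
          have hd1 : dist u r < δ := by
            rw [Real.dist_eq]; exact lt_of_le_of_lt hur habs.1
          have hd2 : dist s s < δ := by simpa using hδ
          exact max_lt hd1 hd2
        have := hδ' _ h1 _ h2 hdist
        rw [dist_eq_norm] at this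
        exact this.le
      have hnorm : ‖(∫ u in r..(r + h), (g u - g r))‖ ≤ ε / 2 * |r + h - r| :=
        intervalIntegral.norm_integral_le_of_norm_le_const hbound
      rw [dist_comm, dist_eq_norm, hsplit]
      rw [norm_div]
      have hhn : ‖(h : ℂ)‖ = |h| := by simp [Complex.norm_real]
      have hhpos : 0 < |h| := abs_pos.2 h0
      rw [hhn]
      calc ‖(∫ u in r..(r + h), (g u - g r))‖ / |h| ≤ (ε / 2 * |h|) / |h| := by
            apply div_le_div_of_nonneg_right ?_ hhpos.le
            · simpa using hnorm
        _ = ε / 2 := by rw [mul_div_assoc, div_self hhpos.ne', mul_one]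
        _ < ε := half_lt_self hε
    · filter_upwards with h
      exact (((ih (r + h)).sub (ih r)).div_const _).differentiableOn

lemma iteratedDerivWithin_Icc_eq (f : ℝ → ℂ) (hf : ContDiff ℝ (⊤ : ℕ∞) f) (j : ℕ) :
    ∀ x ∈ Icc (0:ℝ) 1, iteratedDerivWithin j f (Icc 0 1) x = iteratedDeriv j f x := by
  induction j with
  | zero => intro x _; simp
  | succ j ih =>
    intro x hx
    have hu : UniqueDiffOn ℝ (Icc (0:ℝ) 1) := uniqueDiffOn_Icc one_pos
    rw [iteratedDerivWithin_succ, iteratedDeriv_succ]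
    rw [derivWithin_congr ih (ih x hx)]
    have hdiff : Differentiable ℝ (iteratedDeriv j f) := by
      rw [iteratedDeriv_eq_iterate]
      exact (((hf.of_le (by simp) : ContDiff ℝ ∞ f).iterate_deriv j).differentiable
        (by simp))
    exact (hdiff x).derivWithin (hu x hx)

lemma remainder_bound (S : ℝ × ℂ → ℂ) (hSr : ∀ s : ℂ, ContDiff ℝ (⊤ : ℕ∞) fun r : ℝ => S (r, s))
    (m : ℕ) (s : ℂ) (C : ℝ)
    (hC : ∀ r ∈ Icc (0:ℝ) 1, ‖partialDerivFst S (m + 1) (r, s)‖ ≤ C) :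
    ∀ r ∈ Icc (0:ℝ) 1,
      ‖S (r, s) - ∑ j ∈ Finset.range (m + 1),
          ((r : ℂ) ^ j / (j.factorial : ℂ)) * partialDerivFst S j (0, s)‖
        ≤ C / m.factorial * r ^ (m + 1) := by
  intro r hr
  set f : ℝ → ℂ := fun r => S (r, s) with hfdef
  have hfc : ContDiffOn ℝ (m + 1 : ℕ) f (Icc 0 1) :=
    ((hSr s).of_le (by exact_mod_cast le_top)).contDiffOn
  have hiw : ∀ j : ℕ, ∀ x ∈ Icc (0:ℝ) 1,
      iteratedDerivWithin j f (Icc 0 1) x = partialDerivFst S j (x, s) := by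
    intro j x hx
    rw [iteratedDerivWithin_Icc_eq f (hSr s) j x hx, partialDerivFst_eq_iteratedDeriv]
  have h0mem : (0:ℝ) ∈ Icc (0:ℝ) 1 := ⟨le_refl _, zero_le_one⟩
  have htay : taylorWithinEval f m (Icc 0 1) 0 r
      = ∑ j ∈ Finset.range (m + 1),
          ((r : ℂ) ^ j / (j.factorial : ℂ)) * partialDerivFst S j (0, s) := by
    rw [taylor_within_apply]
    refine Finset.sum_congr rfl fun j _ => ?_
    rw [hiw j 0 h0mem]
    rw [Complex.real_smul]
    push_cast
    rw [sub_zero]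
    ring
  have := taylor_mean_remainder_bound (zero_le_one) hfc hr
    (fun y hy => by rw [hiw (m+1) y hy]; exact hC y hy)
  rw [htay] at this
  calc ‖S (r, s) - ∑ j ∈ Finset.range (m + 1),
          ((r : ℂ) ^ j / (j.factorial : ℂ)) * partialDerivFst S j (0, s)‖
      ≤ C * (r - 0) ^ (m + 1) / m.factorial := this
    _ = C / m.factorial * r ^ (m + 1) := by rw [sub_zero]; ring

lemma integrable_of_rpow_bound {E : Type*} [NormedAddCommGroup E] {c : ℝ} (hc : -1 < c)
    {f : ℝ → E} (hf : AEStronglyMeasurable f (volume.restrict (Ioo (0:ℝ) 1)))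
    {D : ℝ} (hD : ∀ r ∈ Ioo (0:ℝ) 1, ‖f r‖ ≤ D * r ^ c) :
    IntegrableOn f (Ioo (0:ℝ) 1) := by
  have hg : IntegrableOn (fun r : ℝ => D * r ^ c) (Ioo (0:ℝ) 1) := by
    have h1 : IntervalIntegrable (fun x : ℝ => x ^ c) volume 0 1 :=
      intervalIntegral.intervalIntegrable_rpow' hc
    rw [intervalIntegrable_iff, uIoc_of_le zero_le_one] at h1
    exact (h1.mono_set Ioo_subset_Ioc_self).const_mul D
  refine hg.mono' hf ?_
  filter_upwards [ae_restrict_mem measurableSet_Ioo] with r hr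
  exact hD r hr

lemma abs_log_le_rpow {δ : ℝ} (hδ : 0 < δ) {r : ℝ} (hr : r ∈ Ioo (0:ℝ) 1) :
    |Real.log r| ≤ r ^ (-δ) / δ := by
  have hr0 := hr.1
  have hlog : Real.log r < 0 := Real.log_neg hr0 hr.2
  rw [abs_of_neg hlog]
  have h1 : Real.log ((r⁻¹) ^ δ) ≤ (r⁻¹) ^ δ - 1 :=
    Real.log_le_sub_one_of_pos (Real.rpow_pos_of_pos (inv_pos.2 hr0) δ)
  rw [Real.log_rpow (inv_pos.2 hr0), Real.log_inv] at h1
  have h2 : (r⁻¹) ^ δ = r ^ (-δ) := by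
    rw [Real.inv_rpow hr0.le, ← Real.rpow_neg hr0.le]
  rw [h2] at h1
  rw [le_div_iff₀ hδ]
  nlinarith

lemma integrableOn_rpow_mul_abs_log_add_one {c : ℝ} (hc : -1 < c) :
    IntegrableOn (fun r : ℝ => r ^ c * (|Real.log r| + 1)) (Ioo (0:ℝ) 1) := by
  set δ := (c + 1) / 2 with hδdef
  have hδ : 0 < δ := by rw [hδdef]; linarith
  have hmeas : AEStronglyMeasurable (fun r : ℝ => r ^ c * (|Real.log r| + 1))
      (volume.restrict (Ioo (0:ℝ) 1)) := by
    apply ContinuousOn.aestronglyMeasurable ?_ measurableSet_Ioo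
    intro r hr
    apply ContinuousWithinAt.mul
    · exact (Real.continuousAt_rpow_const r c (Or.inl hr.1.ne')).continuousWithinAt
    · exact (((Real.continuousAt_log hr.1.ne').abs).add continuousAt_const).continuousWithinAt
  refine integrable_of_rpow_bound (c := c - δ) (by rw [hδdef]; linarith) hmeas
    (D := 1/δ + 1) ?_
  intro r hr
  have hr0 := hr.1
  have hb1 : r ^ c * |Real.log r| ≤ (1/δ) * r ^ (c - δ) := by
    have := abs_log_le_rpow hδ hr
    calc r ^ c * |Real.log r| ≤ r ^ c * (r ^ (-δ) / δ) := by
          apply mul_le_mul_of_nonneg_left this (Real.rpow_nonneg hr0.le c)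
      _ = (1/δ) * r ^ (c - δ) := by
          have hmul : r ^ c * r ^ (-δ) = r ^ (c - δ) := by
            rw [← Real.rpow_add hr0]; ring_nf
          rw [← hmul]; ring
  have hb2 : r ^ c * 1 ≤ r ^ (c - δ) := by
    rw [mul_one]
    exact Real.rpow_le_rpow_of_exponent_ge hr0 hr.2.le (by linarith)
  have hnn : 0 ≤ r ^ c := Real.rpow_nonneg hr0.le c
  rw [Real.norm_eq_abs, _root_.abs_of_nonneg (by positivity)]
  calc r ^ c * (|Real.log r| + 1) = r ^ c * |Real.log r| + r ^ c * 1 := by ring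
    _ ≤ (1/δ) * r ^ (c - δ) + r ^ (c - δ) := add_le_add hb1 hb2
    _ = (1/δ + 1) * r ^ (c - δ) := by ring

lemma cauchy_deriv_bound {f : ℂ → ℂ} (hf : Differentiable ℂ f) {c : ℂ} {R C : ℝ}
    (hR : 0 < R) (hC : ∀ z ∈ sphere c R, ‖f z‖ ≤ C) : ‖deriv f c‖ ≤ C / R :=
  Complex.norm_deriv_le_of_forall_mem_sphere_norm_le hR
    (hf.differentiableOn.diffContOnCl) hC

end Aux

/-- the key step in the analytic continuation of the Brylinski beta
function. If `S : ℝ × ℂ → ℂ` is jointly continuous, smooth in the first variable with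
jointly continuous partial derivatives `∂ʲS/∂rʲ`, and entire in the second variable,
then for `k ≥ 1` the function
`h(s) = ∫₀¹ r^{s+n-1} (S(r,s) - ∑_{j<k} rʲ/j! ∂ʲS/∂rʲ(0,s)) dr`
is well defined and holomorphic on the half-plane `Re s > -n - k`. -/
theorem taylor_remainder_integral_holomorphic
    (n k : ℕ) (hn : 1 ≤ n) (hk : 1 ≤ k)
    (S : ℝ × ℂ → ℂ)
    (hS : Continuous S)
    (hSr : ∀ s : ℂ, ContDiff ℝ (⊤ : ℕ∞) fun r : ℝ => S (r, s))
    (hSj : ∀ j : ℕ, Continuous (partialDerivFst S j))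
    (hSs : ∀ r : ℝ, Differentiable ℂ fun s : ℂ => S (r, s)) :
    (∀ s : ℂ, -(n : ℝ) - k < s.re →
      IntegrableOn
        (fun r : ℝ => (r : ℂ) ^ (s + n - 1) *
          (S (r, s) - ∑ j ∈ Finset.range k,
            ((r : ℂ) ^ j / (j.factorial : ℂ)) * partialDerivFst S j (0, s)))
        (Set.Ioo (0 : ℝ) 1)) ∧
    DifferentiableOn ℂ
      (fun s : ℂ => ∫ r in Set.Ioo (0 : ℝ) 1,
        (r : ℂ) ^ (s + n - 1) *
          (S (r, s) - ∑ j ∈ Finset.range k,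
            ((r : ℂ) ^ j / (j.factorial : ℂ)) * partialDerivFst S j (0, s)))
      {s : ℂ | -(n : ℝ) - k < s.re} := by

  obtain ⟨m, rfl⟩ : ∃ m, k = m + 1 := ⟨k - 1, (Nat.succ_pred_eq_of_pos hk).symm⟩
  -- notation
  set G : ℝ → ℂ → ℂ := fun r s => S (r, s) - ∑ j ∈ Finset.range (m + 1),
      ((r : ℂ) ^ j / (j.factorial : ℂ)) * partialDerivFst S j (0, s) with hGdef
  set F : ℂ → ℝ → ℂ := fun s r => (r : ℂ) ^ (s + n - 1) * G r s with hFdef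
  -- continuity in r of G
  have hGr_cont : ∀ s : ℂ, Continuous fun r : ℝ => G r s := by
    intro s
    apply Continuous.sub
    · exact hS.comp (continuous_id.prodMk continuous_const)
    · exact continuous_finset_sum _ fun j _ =>
        ((Complex.continuous_ofReal.pow j).div_const _).mul continuous_const
  -- differentiability in s of G
  have hGs_diff : ∀ r : ℝ, Differentiable ℂ fun s : ℂ => G r s := by
    intro r
    apply Differentiable.sub (hSs r)
    apply Differentiable.fun_sum
    intro j _
    exact (differentiable_partialDerivFst S hSr hSj hSs j 0).const_mul _
  -- continuity of F s on Ioo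
  have hF_contOn : ∀ s : ℂ, ContinuousOn (F s) (Ioo (0:ℝ) 1) := by
    intro s
    apply ContinuousOn.mul ?_ (hGr_cont s).continuousOn
    intro r hr
    apply ContinuousAt.continuousWithinAt
    exact (continuousAt_cpow_const
      (Complex.mem_slitPlane_iff.2 (Or.inl (by simpa using hr.1)))).comp
      Complex.continuous_ofReal.continuousAt
  -- norm of the cpow factor
  have hcpow_norm : ∀ (s : ℂ), ∀ r ∈ Ioo (0:ℝ) 1,
      ‖(r : ℂ) ^ (s + n - 1)‖ = r ^ (s.re + n - 1) := by
    intro s r hr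
    rw [Complex.norm_cpow_eq_rpow_re_of_pos hr.1]
    norm_num
  -- uniform bound on G over a compact set of parameters
  have hGbound : ∀ K : Set ℂ, IsCompact K → ∃ D : ℝ, 0 ≤ D ∧
      ∀ s ∈ K, ∀ r ∈ Icc (0:ℝ) 1, ‖G r s‖ ≤ D * r ^ (m + 1) := by
    intro K hK
    obtain ⟨C0, hC0⟩ := (isCompact_Icc.prod hK).exists_bound_of_continuousOn
      (hSj (m + 1)).continuousOn
    refine ⟨max C0 0 / m.factorial, by positivity, fun s hs r hr => ?_⟩
    have := remainder_bound S hSr m s (max C0 0)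
      (fun u hu => le_trans (hC0 (u, s) ⟨hu, hs⟩) (le_max_left _ _)) r hr
    exact this
  -- Part 1: integrability
  have key1 : ∀ s : ℂ, -(n : ℝ) - (m + 1 : ℕ) < s.re → IntegrableOn (F s) (Ioo (0:ℝ) 1) := by
    intro s hs
    obtain ⟨D, hD0, hD⟩ := hGbound {s} isCompact_singleton
    have hc : (-1 : ℝ) < s.re + n - 1 + (m + 1) := by
      push_cast at hs ⊢
      linarith
    apply integrable_of_rpow_bound hc
      ((hF_contOn s).aestronglyMeasurable measurableSet_Ioo) (D := D)
    intro r hr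
    rw [hFdef]
    simp only []
    rw [norm_mul, hcpow_norm s r hr]
    calc r ^ (s.re + n - 1) * ‖G r s‖
        ≤ r ^ (s.re + n - 1) * (D * r ^ (m + 1)) := by
          apply mul_le_mul_of_nonneg_left
            (hD s rfl r ⟨hr.1.le, hr.2.le⟩) (Real.rpow_nonneg hr.1.le _)
      _ = D * r ^ (s.re + n - 1 + (m + 1)) := by
          rw [Real.rpow_add hr.1]
          rw [show ((m : ℝ) + 1) = ((m + 1 : ℕ) : ℝ) by push_cast; ring]
          rw [Real.rpow_natCast]
          ring
  constructor
  · exact key1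
  -- Part 2: holomorphy
  have hUopen : IsOpen {s : ℂ | -(n : ℝ) - (m + 1 : ℕ) < s.re} :=
    isOpen_lt continuous_const Complex.continuous_re
  intro s₀ hs₀
  have hs₀' : -(n : ℝ) - (m + 1 : ℕ) < s₀.re := hs₀
  set a : ℝ := s₀.re + n + (m + 1) with hadef
  have ha : 0 < a := by push_cast at hs₀'; rw [hadef]; push_cast; linarith
  set ε : ℝ := a / 4 with hεdef
  have hε : 0 < ε := by positivity
  obtain ⟨D, hD0, hD⟩ := hGbound (closedBall s₀ (2 * ε)) (isCompact_closedBall _ _)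
  -- derivative in s of G
  set G' : ℝ → ℂ → ℂ := fun r s => deriv (fun w : ℂ => G r w) s with hG'def
  have hG'b : ∀ s ∈ ball s₀ ε, ∀ r ∈ Icc (0:ℝ) 1, ‖G' r s‖ ≤ D * r ^ (m + 1) / ε := by
    intro s hs r hr
    apply cauchy_deriv_bound (hGs_diff r) hε
    intro z hz
    apply hD z ?_ r hr
    rw [mem_closedBall]
    calc dist z s₀ ≤ dist z s + dist s s₀ := dist_triangle _ _ _
      _ ≤ ε + ε := add_le_add (le_of_eq (mem_sphere.1 hz)) (le_of_lt (mem_ball.1 hs))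
      _ = 2 * ε := by ring
  -- derivative of F in s
  set F' : ℂ → ℝ → ℂ := fun s r =>
    (r : ℂ) ^ (s + n - 1) * Complex.log r * G r s + (r : ℂ) ^ (s + n - 1) * G' r s
    with hF'def
  have hader : ∀ r ∈ Ioo (0:ℝ) 1, ∀ s : ℂ, HasDerivAt (fun s => F s r) (F' s r) s := by
    intro r hr s
    have h1 : HasDerivAt (fun s : ℂ => (r : ℂ) ^ (s + n - 1))
        ((r : ℂ) ^ (s + n - 1) * Complex.log r * 1) s :=
      (((hasDerivAt_id s).add_const (n : ℂ)).sub_const 1).const_cpow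
        (Or.inl (Complex.ofReal_ne_zero.2 hr.1.ne'))
    have h2 : HasDerivAt (fun w : ℂ => G r w) (G' r s) s := (hGs_diff r s).hasDerivAt
    have := h1.fun_mul h2
    simpa [mul_one] using this
  -- the uniform bound for F'
  have hc : (-1 : ℝ) < s₀.re - ε + n - 1 + (m + 1) := by
    have : s₀.re - ε + n - 1 + (m + 1) = a - ε - 1 := by rw [hadef]; ring
    rw [this, hεdef]
    linarith
  set c : ℝ := s₀.re - ε + n - 1 + (m + 1) with hcdef
  set bound : ℝ → ℝ := fun r => (D * (1 + 1 / ε)) * (r ^ c * (|Real.log r| + 1))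
    with hbdef
  have h_bnd : ∀ r ∈ Ioo (0:ℝ) 1, ∀ s ∈ ball s₀ ε, ‖F' s r‖ ≤ bound r := by
    intro r hr s hs
    have hre : s₀.re - ε < s.re := by
      have h1 : |(s - s₀).re| ≤ ‖s - s₀‖ := Complex.abs_re_le_norm _
      rw [Complex.sub_re] at h1
      have h2 : ‖s - s₀‖ < ε := by rw [← Complex.dist_eq]; exact mem_ball.1 hs
      have := abs_lt.1 (lt_of_le_of_lt h1 h2)
      linarith [this.1]
    have hcp : ‖(r : ℂ) ^ (s + n - 1)‖ ≤ r ^ (s₀.re - ε + n - 1) := by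
      rw [hcpow_norm s r hr]
      exact Real.rpow_le_rpow_of_exponent_ge hr.1 hr.2.le (by linarith)
    have hlog : ‖Complex.log r‖ = |Real.log r| := by
      rw [← Complex.ofReal_log hr.1.le]
      simp [Complex.norm_real]
    have hGb : ‖G r s‖ ≤ D * r ^ (m + 1) :=
      hD s (mem_closedBall.2 ((mem_ball.1 hs).le.trans (by linarith))) r ⟨hr.1.le, hr.2.le⟩
    have hG'b' : ‖G' r s‖ ≤ D * r ^ (m + 1) / ε := hG'b s hs r ⟨hr.1.le, hr.2.le⟩
    have hrpow_nn : (0:ℝ) ≤ r ^ (s₀.re - ε + n - 1) := Real.rpow_nonneg hr.1.le _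
    have hcomb : r ^ (s₀.re - ε + n - 1) * r ^ (m + 1 : ℕ) = r ^ c := by
      rw [hcdef, Real.rpow_add hr.1, ← Real.rpow_natCast r (m + 1)]
      push_cast
      ring_nf
    have hrc_nn : (0:ℝ) ≤ r ^ c := Real.rpow_nonneg hr.1.le _
    have hlog_nn : (0:ℝ) ≤ |Real.log r| := abs_nonneg _
    calc ‖F' s r‖ ≤ ‖(r : ℂ) ^ (s + n - 1) * Complex.log r * G r s‖
          + ‖(r : ℂ) ^ (s + n - 1) * G' r s‖ := norm_add_le _ _
      _ = ‖(r : ℂ) ^ (s + n - 1)‖ * ‖Complex.log r‖ * ‖G r s‖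
          + ‖(r : ℂ) ^ (s + n - 1)‖ * ‖G' r s‖ := by rw [norm_mul, norm_mul, norm_mul]
      _ ≤ r ^ (s₀.re - ε + n - 1) * |Real.log r| * (D * r ^ (m + 1))
          + r ^ (s₀.re - ε + n - 1) * (D * r ^ (m + 1) / ε) := by
          apply add_le_add
          · apply mul_le_mul ?_ hGb (norm_nonneg _) (by positivity)
            rw [hlog]
            exact mul_le_mul_of_nonneg_right hcp hlog_nn
          · exact mul_le_mul hcp hG'b' (norm_nonneg _) hrpow_nn
      _ = D * (r ^ c * |Real.log r|) + (D / ε) * r ^ c := by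
          rw [← hcomb]; ring
      _ ≤ bound r := by
          have h1 : (0:ℝ) ≤ D * (r ^ c) := mul_nonneg hD0 hrc_nn
          have h2 : (0:ℝ) ≤ (D / ε) * (r ^ c * |Real.log r|) := by positivity
          have hexp : (D * (1 + 1 / ε)) * (r ^ c * (|Real.log r| + 1))
              = D * (r ^ c * |Real.log r|) + D * r ^ c
                + (D / ε) * (r ^ c * |Real.log r|) + (D / ε) * r ^ c := by
            field_simp
            ring
          show D * (r ^ c * |Real.log r|) + D / ε * r ^ c
              ≤ (D * (1 + 1 / ε)) * (r ^ c * (|Real.log r| + 1))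
          rw [hexp]
          linarith
  -- apply differentiation under the integral sign
  have hμ := (volume : Measure ℝ).restrict (Ioo (0:ℝ) 1)
  have hF_meas : ∀ᶠ s in 𝓝 s₀, AEStronglyMeasurable (F s)
      (volume.restrict (Ioo (0:ℝ) 1)) :=
    Eventually.of_forall fun s => (hF_contOn s).aestronglyMeasurable measurableSet_Ioo
  have hF_int : Integrable (F s₀) (volume.restrict (Ioo (0:ℝ) 1)) := key1 s₀ hs₀'
  -- measurability of F' s₀ as an a.e. limit of slopes
  have hF'_meas : AEStronglyMeasurable (F' s₀) (volume.restrict (Ioo (0:ℝ) 1)) := by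
    set w : ℕ → ℝ := fun q => 1 / (q + 1) with hwdef
    have hw_pos : ∀ q, 0 < w q := fun q => by positivity
    apply aestronglyMeasurable_of_tendsto_ae (u := (atTop : Filter ℕ))
      (f := fun q (r : ℝ) => (F (s₀ + (w q : ℂ)) r - F s₀ r) / ((s₀ + (w q : ℂ)) - s₀))
    · intro q
      apply ContinuousOn.aestronglyMeasurable ?_ measurableSet_Ioo
      exact (((hF_contOn _).sub (hF_contOn _)).div_const _)
    · filter_upwards [ae_restrict_mem measurableSet_Ioo] with r hr
      have hda : HasDerivAt (fun s => F s r) (F' s₀ r) s₀ := hader r hr s₀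
      have hslope := hasDerivAt_iff_tendsto_slope.1 hda
      have hseq : Tendsto (fun q : ℕ => s₀ + (w q : ℂ)) atTop (𝓝[≠] s₀) := by
        apply tendsto_nhdsWithin_of_tendsto_nhds_of_eventually_within
        · have : Tendsto (fun q : ℕ => ((w q : ℝ) : ℂ)) atTop (𝓝 0) := by
            rw [show ((0:ℂ)) = ((0:ℝ):ℂ) by norm_num]
            exact (Complex.continuous_ofReal.tendsto 0).comp
              tendsto_one_div_add_atTop_nhds_zero_nat
          simpa using tendsto_const_nhds.add this
        · apply Eventually.of_forall
          intro q
          simp only [Set.mem_compl_iff, Set.mem_singleton_iff]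
          intro hcon
          have : ((w q : ℝ) : ℂ) = 0 := by
            have := hcon
            simpa using this
          exact (hw_pos q).ne' (by exact_mod_cast this)
      have := hslope.comp hseq
      apply this.congr
      intro q
      simp only [Function.comp_apply, slope_def_field]
  have h_bound_ae : ∀ᵐ r ∂(volume.restrict (Ioo (0:ℝ) 1)),
      ∀ s ∈ ball s₀ ε, ‖F' s r‖ ≤ bound r := by
    filter_upwards [ae_restrict_mem measurableSet_Ioo] with r hr s hs
    exact h_bnd r hr s hs
  have hbound_int : Integrable bound (volume.restrict (Ioo (0:ℝ) 1)) :=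
    (integrableOn_rpow_mul_abs_log_add_one hc).const_mul _
  have h_diff_ae : ∀ᵐ r ∂(volume.restrict (Ioo (0:ℝ) 1)),
      ∀ s ∈ ball s₀ ε, HasDerivAt (fun s => F s r) (F' s r) s := by
    filter_upwards [ae_restrict_mem measurableSet_Ioo] with r hr s _
    exact hader r hr s
  obtain ⟨-, hd⟩ := hasDerivAt_integral_of_dominated_loc_of_deriv_le (ball_mem_nhds s₀ hε) hF_meas hF_int
    hF'_meas h_bound_ae hbound_int h_diff_ae
  exact hd.differentiableAt.differentiableWithinAt
end
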